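/- Let G be a finite normal form game with strict preferences and let a₀ ∈ A be Pareto optimal. Then for every positive integer k and every admissible player function I, the no-harm equilibrium outcome of Γ(a₀,k,I) is a₀ itself. -/

import Mathlib

namespace NoHarm

/-- A finite normal form game with `n` players: finite action sets `A i`,
nonempty, with decidable equality, and utility functions `u i : Profile → ℝ`. -/
structure Game (n : ℕ) where
  A : Fin n → Type
  fintypeA : ∀ i, Fintype (A i)
  decA : ∀ i, DecidableEq (A i)
  neA : ∀ i, Nonempty (A i)
  u : Fin n → (∀ i, A i) → ℝ

attribute [instance] Game.fintypeA Game.decA Game.neA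

/-- Action profiles of `G`. -/
abbrev Profile {n : ℕ} (G : Game n) : Type := ∀ i, G.A i

/-- A recorded move in the extensive form game `Γ`: the acting player together
with their choice (`none` = pass, `some a` = choose action `a`; choosing the
current component of the state is "staying", any other action is "moving"). -/
abbrev Move {n : ℕ} (G : Game n) : Type := Σ i : Fin n, Option (G.A i)

/-- A node of `Γ`, identified with the history of moves leading to it
(the root is `[]`). -/
abbrev Hist {n : ℕ} (G : Game n) : Type := List (Move G)

variable {n : ℕ}

/-- One step of the left fold computing, along a history, the triple
(current state, current reference point, player who established the current
reference point by staying -- `none` for the initial reference point). -/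
def stepFold (G : Game n) (x : Profile G × Profile G × Option (Fin n)) (m : Move G) :
    Profile G × Profile G × Option (Fin n) :=
  match m with
  | ⟨_, none⟩ => x
  | ⟨i, some a⟩ =>
    if a = x.1 i then (x.1, x.1, some i)
    else (Function.update x.1 i a, x.2.1, x.2.2)

/-- The (state, reference point, proposer) data at the node `h` of `Γ(a0,·,·)`. -/
def fold3 (G : Game n) (a0 : Profile G) (h : Hist G) :
    Profile G × Profile G × Option (Fin n) :=
  h.foldl (stepFold G) (a0, a0, none)

/-- The state `S(x)` at a node. -/
def state (G : Game n) (a0 : Profile G) (h : Hist G) : Profile G := (fold3 G a0 h).1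

/-- The reference point at a node (the most recent state at which a player
stayed, initially `a0`). -/
def refpt (G : Game n) (a0 : Profile G) (h : Hist G) : Profile G := (fold3 G a0 h).2.1

/-- The player who established the current reference point by staying
(`none` if it is still the initial reference point `a0`). -/
def proposer (G : Game n) (a0 : Profile G) (h : Hist G) : Option (Fin n) :=
  (fold3 G a0 h).2.2

/-- `m` is a stay action at the node `h`: the mover chooses exactly the
component of the current state belonging to them. -/
def IsStay (G : Game n) (a0 : Profile G) (h : Hist G) (m : Move G) : Prop :=
  m.2 = some (state G a0 h m.1)

/-- Termination condition (i): one player stayed at a state `b`, making it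
the reference point, and a different player subsequently also stays at `b`. -/
def TerminalStay (G : Game n) (a0 : Profile G) (h : Hist G) : Prop :=
  ∃ (h' : Hist G) (m : Move G) (i : Fin n),
    h = h' ++ [m] ∧ IsStay G a0 h' m ∧ refpt G a0 h' = state G a0 h' ∧
    proposer G a0 h' = some i ∧ i ≠ m.1

/-- Termination condition (ii): all `n` players consecutively pass
(the last `n` moves are passes and every player is among their movers). -/
def TerminalPass (G : Game n) (h : Hist G) : Prop :=
  n ≤ h.length ∧ (∀ m ∈ h.drop (h.length - n), m.2 = none) ∧
    (∀ i : Fin n, ∃ m ∈ h.drop (h.length - n), m.1 = i)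

/-- Terminal nodes of `Γ(a0,·,·)`. -/
def Terminal (G : Game n) (a0 : Profile G) (h : Hist G) : Prop :=
  TerminalStay G a0 h ∨ TerminalPass G h

/-- Number of predecessor nodes of `h` having the same state as `h` at which
the move `m` was made. -/
def countAct (G : Game n) (a0 : Profile G) (h : Hist G) (m : Move G) : ℕ :=
  ((Finset.range h.length).filter
    (fun t => h[t]? = some m ∧ state G a0 (h.take t) = state G a0 h)).card

/-- Availability of the choice `c` for player `i` at node `h`: pass is always
available, and an action `a` is available iff `i` has chosen `a` at fewer than
`k` predecessor nodes carrying the same state as `h`. -/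
def availAct (G : Game n) (a0 : Profile G) (k : ℕ) (h : Hist G) {i : Fin n}
    (c : Option (G.A i)) : Prop :=
  ∀ a : G.A i, c = some a → countAct G a0 h ⟨i, some a⟩ < k

/-- `h` is a (valid) node of the game tree of `Γ(a0,k,I)`: at each step the
recorded mover is the active player given by the player function `I`, the
chosen action was available, and no proper predecessor is terminal. -/
structure IsNode (G : Game n) (a0 : Profile G) (k : ℕ) (I : Hist G → Fin n)
    (h : Hist G) : Prop where
  mover : ∀ (t : ℕ) (ht : t < h.length), (h.get ⟨t, ht⟩).1 = I (h.take t)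
  avail : ∀ (t : ℕ) (ht : t < h.length), availAct G a0 k (h.take t) (h.get ⟨t, ht⟩).2
  nonterm : ∀ t < h.length, ¬ Terminal G a0 (h.take t)

/-- The player function is admissible: along every path of play the numbers of
nodes at which any two players have been active differ by at most one. -/
def Admissible (G : Game n) (a0 : Profile G) (k : ℕ) (I : Hist G → Fin n) : Prop :=
  ∀ h, IsNode G a0 k I h → ∀ i j : Fin n,
    (h.map Sigma.fst).count i ≤ (h.map Sigma.fst).count j + 1

/-- A pure strategy of player `i`: a choice (pass or an action) at every node. -/
abbrev Strategy (G : Game n) (i : Fin n) : Type := Hist G → Option (G.A i)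

/-- A pure strategy profile. -/
abbrev StratProfile (G : Game n) : Type := ∀ i, Strategy G i

/-- A strategy profile is valid if at every non-terminal node of the tree the
active player's prescribed choice is available. -/
def ValidProfile (G : Game n) (a0 : Profile G) (k : ℕ) (I : Hist G → Fin n)
    (σ : StratProfile G) : Prop :=
  ∀ h, IsNode G a0 k I h → ¬ Terminal G a0 h → availAct G a0 k h (σ (I h) h)

open Classical in
/-- Play according to `σ` for (at most) the given number of steps from a node,
stopping at terminal nodes. -/
noncomputable def playN (G : Game n) (a0 : Profile G) (I : Hist G → Fin n)
    (σ : StratProfile G) : ℕ → Hist G → Hist G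
  | 0, h => h
  | (t + 1), h =>
    if Terminal G a0 h then h
    else playN G a0 I σ t (h ++ [⟨I h, σ (I h) h⟩])

/-- A (generous) upper bound for the length of any play of `Γ(a0,k,I)`. -/
def bound (G : Game n) (k : ℕ) : ℕ :=
  ((k + 2) * (Fintype.card (Profile G) + 2) * ((∑ i, Fintype.card (G.A i)) + 2) + 2)
    * (n + 2) * 4

/-- The outcome of `σ` in the subgame rooted at `h`: the reference point at the
terminal node reached by playing `σ` from `h`. -/
noncomputable def outcomeFrom (G : Game n) (a0 : Profile G) (k : ℕ)
    (I : Hist G → Fin n) (σ : StratProfile G) (h : Hist G) : Profile G :=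
  refpt G a0 (playN G a0 I σ (bound G k + 1) h)

/-- The outcome of the strategy profile `σ` in `Γ(a0,k,I)`. -/
noncomputable def outcome (G : Game n) (a0 : Profile G) (k : ℕ)
    (I : Hist G → Fin n) (σ : StratProfile G) : Profile G :=
  outcomeFrom G a0 k I σ []

/-- `σ` satisfies the no-harm principle: every stay action it prescribes, at
every (on- or off-path) non-terminal node of the tree, does not harm any other
player relative to the reference point at that node. -/
def SatNHP (G : Game n) (a0 : Profile G) (k : ℕ) (I : Hist G → Fin n)
    (σ : StratProfile G) : Prop :=
  ∀ h, IsNode G a0 k I h → ¬ Terminal G a0 h →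
    σ (I h) h = some (state G a0 h (I h)) →
    ∀ j, j ≠ I h → G.u j (refpt G a0 h) ≤ G.u j (state G a0 h)

/-- No-harm equilibrium of `Γ(a0,k,I)`: a valid strategy profile satisfying the
NHP such that at every non-terminal node the active player's choice is a best
response among deviations keeping the profile valid and NHP-compliant. -/
def NHE (G : Game n) (a0 : Profile G) (k : ℕ) (I : Hist G → Fin n)
    (σ : StratProfile G) : Prop :=
  ValidProfile G a0 k I σ ∧ SatNHP G a0 k I σ ∧
  ∀ h, IsNode G a0 k I h → ¬ Terminal G a0 h →
    ∀ τ : Strategy G (I h),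
      ValidProfile G a0 k I (Function.update σ (I h) τ) →
      SatNHP G a0 k I (Function.update σ (I h) τ) →
      G.u (I h) (outcomeFrom G a0 k I (Function.update σ (I h) τ) h) ≤
        G.u (I h) (outcomeFrom G a0 k I σ h)

/-- Subgame perfect equilibrium of `Γ(a0,k,I)` (no NHP constraint). -/
def SPE (G : Game n) (a0 : Profile G) (k : ℕ) (I : Hist G → Fin n)
    (σ : StratProfile G) : Prop :=
  ValidProfile G a0 k I σ ∧
  ∀ h, IsNode G a0 k I h → ¬ Terminal G a0 h →
    ∀ τ : Strategy G (I h),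
      ValidProfile G a0 k I (Function.update σ (I h) τ) →
      G.u (I h) (outcomeFrom G a0 k I (Function.update σ (I h) τ) h) ≤
        G.u (I h) (outcomeFrom G a0 k I σ h)

/-- `b` Pareto dominates `a`. -/
def ParetoDom (G : Game n) (b a : Profile G) : Prop :=
  (∀ i, G.u i a ≤ G.u i b) ∧ ∃ i, G.u i a < G.u i b

/-- `a` is Pareto optimal. -/
def ParetoOpt (G : Game n) (a : Profile G) : Prop := ∀ b, ¬ ParetoDom G b a

/-- `b` strictly Pareto dominates `a`. -/
def StrictDom (G : Game n) (b a : Profile G) : Prop := ∀ i, G.u i a < G.u i b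

/-- `a` is weakly Pareto optimal. -/
def WeakParetoOpt (G : Game n) (a : Profile G) : Prop := ∀ b, ¬ StrictDom G b a

/-- Preferences are strict: each utility function is injective on profiles. -/
def StrictPrefs (G : Game n) : Prop := ∀ i, Function.Injective (G.u i)


/-! ### Auxiliary development -/

section Aux

variable {G : Game n} {a0 : Profile G} {k : ℕ} {I : Hist G → Fin n}

theorem fold3_concat (G : Game n) (a0 : Profile G) (h : Hist G) (m : Move G) :
    fold3 G a0 (h ++ [m]) = stepFold G (fold3 G a0 h) m := by
  simp [fold3, List.foldl_append]

theorem refpt_nil (G : Game n) (a0 : Profile G) : refpt G a0 [] = a0 := rfl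

theorem refpt_concat_pass (h : Hist G) (i : Fin n) :
    refpt G a0 (h ++ [⟨i, none⟩]) = refpt G a0 h := by
  simp [refpt, fold3_concat, stepFold]

theorem state_concat_pass (h : Hist G) (i : Fin n) :
    state G a0 (h ++ [⟨i, none⟩]) = state G a0 h := by
  simp [state, fold3_concat, stepFold]

theorem refpt_concat_stay (h : Hist G) (i : Fin n) (a : G.A i)
    (ha : a = state G a0 h i) :
    refpt G a0 (h ++ [⟨i, some a⟩]) = state G a0 h := by
  simp only [refpt, state, fold3_concat, stepFold] at *
  rw [if_pos ha]

theorem refpt_concat_move (h : Hist G) (i : Fin n) (a : G.A i)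
    (ha : ¬ a = state G a0 h i) :
    refpt G a0 (h ++ [⟨i, some a⟩]) = refpt G a0 h := by
  simp only [refpt, state, fold3_concat, stepFold] at *
  rw [if_neg ha]

/-- Case analysis on how the reference point evolves after one move. -/
theorem refpt_concat_cases (h : Hist G) (i : Fin n) (c : Option (G.A i)) :
    refpt G a0 (h ++ [⟨i, c⟩]) = refpt G a0 h ∨
      (c = some (state G a0 h i) ∧ refpt G a0 (h ++ [⟨i, c⟩]) = state G a0 h) := by
  cases c with
  | none => exact Or.inl (refpt_concat_pass h i)
  | some a =>
    by_cases ha : a = state G a0 h i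
    · exact Or.inr ⟨by rw [ha], refpt_concat_stay h i a ha⟩
    · exact Or.inl (refpt_concat_move h i a ha)

theorem availAct_none (h : Hist G) (i : Fin n) :
    availAct G a0 k h (none : Option (G.A i)) := fun a ha => by cases ha

/-- Prefixes of nodes are nodes. -/
theorem IsNode.take (hh : IsNode G a0 k I h) (ℓ : ℕ) : IsNode G a0 k I (h.take ℓ) := by
  have hlen : (h.take ℓ).length = min ℓ h.length := by simp
  have htake : ∀ t : ℕ, t ≤ ℓ → (h.take ℓ).take t = h.take t := by
    intro t htℓ
    rw [List.take_take, min_eq_left htℓ]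
  refine ⟨?_, ?_, ?_⟩
  · intro t ht
    have ht' : t < h.length := lt_of_lt_of_le (hlen ▸ ht) (min_le_right _ _)
    have htℓ : t < ℓ := lt_of_lt_of_le (hlen ▸ ht) (min_le_left _ _)
    have hg : (h.take ℓ).get ⟨t, ht⟩ = h.get ⟨t, ht'⟩ := by
      simp [List.get_eq_getElem, List.getElem_take]
    rw [hg, htake t htℓ.le]
    exact hh.mover t ht'
  · intro t ht
    have ht' : t < h.length := lt_of_lt_of_le (hlen ▸ ht) (min_le_right _ _)
    have htℓ : t < ℓ := lt_of_lt_of_le (hlen ▸ ht) (min_le_left _ _)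
    have hg : (h.take ℓ).get ⟨t, ht⟩ = h.get ⟨t, ht'⟩ := by
      simp [List.get_eq_getElem, List.getElem_take]
    rw [hg, htake t htℓ.le]
    exact hh.avail t ht'
  · intro t ht
    have ht' : t < h.length := lt_of_lt_of_le (hlen ▸ ht) (min_le_right _ _)
    have htℓ : t < ℓ := lt_of_lt_of_le (hlen ▸ ht) (min_le_left _ _)
    rw [htake t htℓ.le]
    exact hh.nonterm t ht'

theorem isNode_nil : IsNode G a0 k I [] :=
  ⟨fun t ht => by simp at ht, fun t ht => by simp at ht, fun t ht => by simp at ht⟩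

/-- Extending a non-terminal node by an available move of the active player. -/
theorem IsNode.concat (hh : IsNode G a0 k I h) (hT : ¬ Terminal G a0 h)
    {c : Option (G.A (I h))} (hav : availAct G a0 k h c) :
    IsNode G a0 k I (h ++ [(⟨I h, c⟩ : Move G)]) := by
  have hlen : (h ++ [(⟨I h, c⟩ : Move G)]).length = h.length + 1 := by simp
  refine ⟨?_, ?_, ?_⟩
  · intro t ht
    rcases Nat.lt_or_ge t h.length with h1 | h1
    · have hg : (h ++ [(⟨I h, c⟩ : Move G)]).get ⟨t, ht⟩ = h.get ⟨t, h1⟩ := by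
        simp [List.get_eq_getElem, List.getElem_append_left h1]
      rw [hg, List.take_append_of_le_length h1.le]
      exact hh.mover t h1
    · have h2 : t = h.length := by rw [hlen] at ht; omega
      have hg : (h ++ [(⟨I h, c⟩ : Move G)]).get ⟨t, ht⟩ = ⟨I h, c⟩ := by
        simp [List.get_eq_getElem, List.getElem_concat_length h2]
      rw [hg]
      have : (h ++ [(⟨I h, c⟩ : Move G)]).take t = h := by
        rw [h2]; exact List.take_left
      rw [this]
  · intro t ht
    rcases Nat.lt_or_ge t h.length with h1 | h1
    · have hg : (h ++ [(⟨I h, c⟩ : Move G)]).get ⟨t, ht⟩ = h.get ⟨t, h1⟩ := by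
        simp [List.get_eq_getElem, List.getElem_append_left h1]
      rw [hg, List.take_append_of_le_length h1.le]
      exact hh.avail t h1
    · have h2 : t = h.length := by rw [hlen] at ht; omega
      have hg : (h ++ [(⟨I h, c⟩ : Move G)]).get ⟨t, ht⟩ = ⟨I h, c⟩ := by
        simp [List.get_eq_getElem, List.getElem_concat_length h2]
      rw [hg]
      have : (h ++ [(⟨I h, c⟩ : Move G)]).take t = h := by
        rw [h2]; exact List.take_left
      rw [this]
      exact hav
  · intro t ht
    rcases Nat.lt_or_ge t h.length with h1 | h1
    · rw [List.take_append_of_le_length h1.le]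
      exact hh.nonterm t h1
    · have h2 : t = h.length := by rw [hlen] at ht; omega
      have : (h ++ [(⟨I h, c⟩ : Move G)]).take t = h := by
        rw [h2]; exact List.take_left
      rw [this]
      exact hT

/-! ### playN lemmas -/

theorem playN_zero (σ : StratProfile G) (h : Hist G) : playN G a0 I σ 0 h = h := rfl

theorem playN_succ_of_terminal (σ : StratProfile G) (h : Hist G) (T : ℕ)
    (hT : Terminal G a0 h) : playN G a0 I σ (T + 1) h = h := by
  simp [playN, hT]

theorem playN_succ (σ : StratProfile G) (h : Hist G) (T : ℕ)
    (hT : ¬ Terminal G a0 h) :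
    playN G a0 I σ (T + 1) h = playN G a0 I σ T (h ++ [⟨I h, σ (I h) h⟩]) := by
  simp [playN, hT]

theorem playN_of_terminal (σ : StratProfile G) (h : Hist G) (hT : Terminal G a0 h) :
    ∀ T, playN G a0 I σ T h = h
  | 0 => rfl
  | (T + 1) => playN_succ_of_terminal σ h T hT

theorem playN_add (σ : StratProfile G) :
    ∀ (s t : ℕ) (h : Hist G),
      playN G a0 I σ (s + t) h = playN G a0 I σ t (playN G a0 I σ s h)
  | 0, t, h => by rw [Nat.zero_add]; rfl
  | (s + 1), t, h => by
    by_cases hT : Terminal G a0 h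
    · rw [playN_succ_of_terminal σ h s hT, playN_of_terminal σ h hT,
        playN_of_terminal σ h hT]
    · have : s + 1 + t = (s + t) + 1 := by omega
      rw [this, playN_succ σ h _ hT, playN_succ σ h s hT, playN_add σ s t _]

/-! ### Depth bound -/

theorem sum_count_eq_length (l : List (Fin n)) : ∑ i : Fin n, l.count i = l.length := by
  induction l with
  | nil => simp
  | cons a t ih =>
    simp only [List.count_cons, Finset.sum_add_distrib, ih, List.length_cons]
    congr 1
    simp [beq_iff_eq]

theorem balanced_eq {c : Fin n → ℕ} {m : ℕ} (hn : 0 < n)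
    (hb : ∀ i j, c i ≤ c j + 1) (hs : ∑ i, c i = m * n) (i : Fin n) : c i = m := by
  have hub : ∀ j, c j ≤ m := by
    intro j
    by_contra hlt
    push_neg at hlt
    have h1 : ∀ l, m ≤ c l := fun l => by have := hb j l; omega
    have h2 : ∑ _l : Fin n, m < ∑ l, c l :=
      Finset.sum_lt_sum (fun l _ => h1 l) ⟨j, Finset.mem_univ j, by omega⟩
    rw [hs, Finset.sum_const, Finset.card_univ, Fintype.card_fin, smul_eq_mul,
      Nat.mul_comm m n] at h2
    omega
  have hlb : m ≤ c i := by
    by_contra hlt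
    push_neg at hlt
    have h2 : ∑ l, c l < ∑ _l : Fin n, m :=
      Finset.sum_lt_sum (fun l _ => hub l) ⟨i, Finset.mem_univ i, by omega⟩
    rw [hs, Finset.sum_const, Finset.card_univ, Fintype.card_fin, smul_eq_mul,
      Nat.mul_comm m n] at h2
    omega
  exact le_antisymm (hub i) hlb

theorem count_take_mul (hn : 0 < n) (hI : Admissible G a0 k I)
    (hh : IsNode G a0 k I h) {m : ℕ} (hm : m * n ≤ h.length) (i : Fin n) :
    ((h.map Sigma.fst).take (m * n)).count i = m := by
  have h1 : IsNode G a0 k I (h.take (m * n)) := hh.take _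
  have hb := hI _ h1
  rw [List.map_take] at hb
  have hlen : ((h.map Sigma.fst).take (m * n)).length = m * n := by
    simp
    omega
  exact balanced_eq hn hb (by rw [sum_count_eq_length, hlen]) i

theorem block_lemma (hn : 0 < n) (hI : Admissible G a0 k I)
    (hh : IsNode G a0 k I h) {m : ℕ} (hm : (m + 1) * n ≤ h.length) (i : Fin n) :
    ∃ t, m * n ≤ t ∧ t < (m + 1) * n ∧
      ∃ ht : t < h.length, (h.get ⟨t, ht⟩).1 = i := by
  set J := h.map Sigma.fst with hJ
  have hJlen : J.length = h.length := by simp [hJ]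
  have hsplit : J.take ((m + 1) * n) = J.take (m * n) ++ (J.drop (m * n)).take n := by
    have hmn : (m + 1) * n = m * n + n := by ring
    rw [hmn, List.take_add]
  have hc1 : (J.take ((m + 1) * n)).count i = m + 1 := count_take_mul hn hI hh hm i
  have hc0 : (J.take (m * n)).count i = m :=
    count_take_mul hn hI hh (le_trans (by nlinarith) hm) i
  have hseg : 0 < ((J.drop (m * n)).take n).count i := by
    rw [hsplit, List.count_append, hc0] at hc1
    omega
  have hmem : i ∈ (J.drop (m * n)).take n := List.count_pos_iff.mp hseg
  obtain ⟨j, hjlt, hje⟩ := List.mem_iff_getElem.mp hmem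
  have hjn : j < n := by
    have := hjlt
    simp only [List.length_take] at this
    omega
  have hjd : j < (J.drop (m * n)).length := by
    have := hjlt
    simp only [List.length_take] at this
    omega
  have hmm : (m + 1) * n = m * n + n := by ring
  have hidx : m * n + j < h.length := by
    rw [List.length_drop, hJlen] at hjd
    omega
  refine ⟨m * n + j, Nat.le_add_right _ _, by omega, hidx, ?_⟩
  have hJidx : m * n + j < J.length := by omega
  have e1 : (List.take n (List.drop (m * n) J))[j]'hjlt = J[m * n + j]'hJidx := by
    rw [List.getElem_take, List.getElem_drop]
  have e2 : J[m * n + j]'hJidx = (h.get ⟨m * n + j, hidx⟩).1 := by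
    simp [hJ, List.getElem_map, List.get_eq_getElem]
  rw [← e2, ← e1]
  exact hje

theorem window_nonpass (hn : 0 < n) (hI : Admissible G a0 k I)
    (hh : IsNode G a0 k I h) (t0 : ℕ) (hlt : t0 + 2 * n < h.length) :
    ∃ t, t0 ≤ t ∧ t < t0 + 2 * n ∧ ∃ ht : t < h.length, (h.get ⟨t, ht⟩).2 ≠ none := by
  by_contra hcon
  push_neg at hcon
  set m := t0 / n + 1 with hm
  have hp1 : t0 / n * n ≤ t0 := Nat.div_mul_le_self t0 n
  have hp2 : t0 % n < n := Nat.mod_lt t0 hn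
  have hp3 : n * (t0 / n) + t0 % n = t0 := Nat.div_add_mod t0 n
  have hp4 : t0 / n * n = n * (t0 / n) := Nat.mul_comm _ _
  have hmn1 : t0 < m * n := by
    have : m * n = t0 / n * n + n := by rw [hm]; ring
    omega
  have hmn2 : m * n ≤ t0 + n := by
    have : m * n = t0 / n * n + n := by rw [hm]; ring
    omega
  have hmm : (m + 1) * n = m * n + n := by ring
  have hub : (m + 1) * n ≤ t0 + 2 * n := by omega
  have hlt' : (m + 1) * n < h.length := by omega
  set p := h.take ((m + 1) * n) with hpdef
  have hplen : p.length = (m + 1) * n := by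
    simp [hpdef]
    omega
  have hterm : TerminalPass G p := by
    refine ⟨by rw [hplen]; nlinarith, ?_, ?_⟩
    · intro mv hmv
      rw [hplen] at hmv
      have hdn : (m + 1) * n - n = m * n := by omega
      rw [hdn] at hmv
      obtain ⟨j, hjlt, hje⟩ := List.mem_iff_getElem.mp hmv
      have hjn : j < n := by
        have := hjlt
        simp only [List.length_drop, hplen] at this
        omega
      have hidx : m * n + j < h.length := by omega
      have hpe : (p.drop (m * n))[j] = h.get ⟨m * n + j, hidx⟩ := by
        simp [hpdef, List.get_eq_getElem, List.getElem_drop, List.getElem_take]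
      rw [hpe] at hje
      rw [← hje]
      exact hcon (m * n + j) (by omega) (by omega) hidx
    · intro i
      obtain ⟨t, ht1, ht2, ht3, ht4⟩ := block_lemma hn hI hh hlt'.le i
      have hdn : p.length - n = m * n := by omega
      rw [hdn]
      have hjlt : t - m * n < (p.drop (m * n)).length := by
        simp only [List.length_drop, hplen]
        omega
      refine ⟨(p.drop (m * n))[t - m * n], List.getElem_mem hjlt, ?_⟩
      have hpe : (p.drop (m * n))[t - m * n] = h.get ⟨t, ht3⟩ := by
        have : m * n + (t - m * n) = t := by omega
        simp [hpdef, List.get_eq_getElem, List.getElem_drop, List.getElem_take, this]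
      rw [hpe]
      exact ht4
  exact hh.nonterm ((m + 1) * n) hlt' (Or.inr hterm)

theorem IsNode.length_le_bound (hn : 0 < n) (hI : Admissible G a0 k I)
    (hh : IsNode G a0 k I h) : h.length ≤ bound G k := by
  classical
  set L := h.length with hLdef
  let NP : Finset (Fin h.length) := Finset.univ.filter (fun t => (h.get t).2 ≠ none)
  let f : Fin h.length → Move G × Profile G :=
    fun t => (h.get t, state G a0 (h.take (t : ℕ)))
  have fiber : ∀ b : Move G × Profile G, (NP.filter (fun t => f t = b)).card ≤ k := by
    intro b
    by_contra hcard
    push_neg at hcard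
    have hne : (NP.filter (fun t => f t = b)).Nonempty := by
      rw [← Finset.card_pos]; omega
    set F := NP.filter (fun t => f t = b) with hF
    set t0 := F.max' hne with ht0
    have ht0F : t0 ∈ F := F.max'_mem hne
    have ht0NP : t0 ∈ NP ∧ f t0 = b := by
      have := ht0F
      rw [hF, Finset.mem_filter] at this
      exact this
    obtain ⟨a, ha⟩ : ∃ a, (h.get t0).2 = some a := by
      have h1 : (h.get t0).2 ≠ none := by
        have := ht0NP.1
        simp only [NP, Finset.mem_filter] at this
        exact this.2
      cases hx : (h.get t0).2 with
      | none => exact absurd hx h1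
      | some a => exact ⟨a, rfl⟩
    have havail := hh.avail (t0 : ℕ) t0.isLt
    have hcountlt : countAct G a0 (h.take (t0 : ℕ)) ⟨(h.get t0).1, some a⟩ < k := by
      exact havail a ha
    have hmove : (⟨(h.get t0).1, some a⟩ : Move G) = h.get t0 := by
      rw [← ha]
    have hkle : k ≤ countAct G a0 (h.take (t0 : ℕ)) (h.get t0) := by
      unfold countAct
      have htlen : (h.take (t0 : ℕ)).length = (t0 : ℕ) := by
        have := t0.isLt
        rw [List.length_take]
        omega
      rw [htlen]
      have hsub : ∀ t ∈ F.erase t0, ((t : Fin h.length) : ℕ) ∈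
          (Finset.range (t0 : ℕ)).filter
            (fun t => (h.take (t0 : ℕ))[t]? = some (h.get t0) ∧
              state G a0 ((h.take (t0 : ℕ)).take t) = state G a0 (h.take (t0 : ℕ))) := by
        intro t htmem
        rw [Finset.mem_erase] at htmem
        obtain ⟨htne, htF⟩ := htmem
        have htF' : t ∈ NP ∧ f t = b := by
          have := htF; rw [hF, Finset.mem_filter] at this; exact this
        have htlt : (t : ℕ) < (t0 : ℕ) := by
          have hle := F.le_max' t htF
          rw [← ht0] at hle
          exact Fin.lt_iff_val_lt_val.mp (lt_of_le_of_ne hle htne)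
        rw [Finset.mem_filter, Finset.mem_range]
        refine ⟨htlt, ?_, ?_⟩
        · rw [List.getElem?_take]
          rw [if_pos htlt]
          rw [List.getElem?_eq_getElem t.isLt]
          have h1 : h.get t = b.1 := congrArg Prod.fst htF'.2
          have h2 : h.get t0 = b.1 := congrArg Prod.fst ht0NP.2
          rw [← List.get_eq_getElem, h1, h2]
        · rw [List.take_take, min_eq_left htlt.le]
          have h1 : state G a0 (h.take (t : ℕ)) = b.2 := congrArg Prod.snd htF'.2
          have h2 : state G a0 (h.take (t0 : ℕ)) = b.2 := congrArg Prod.snd ht0NP.2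
          rw [h1, h2]
      have hinj : Set.InjOn (fun t : Fin h.length => (t : ℕ)) (F.erase t0) := by
        intro x _ y _ hxy
        exact Fin.val_injective hxy
      have hcle := Finset.card_le_card_of_injOn _ hsub hinj
      have herase : k ≤ (F.erase t0).card := by
        rw [Finset.card_erase_of_mem ht0F]
        omega
      omega
    rw [hmove] at hcountlt
    omega
  have hNP : NP.card ≤ k * Fintype.card (Move G × Profile G) :=
    Finset.card_le_mul_card_image_of_maps_to (f := f) (fun a _ => Finset.mem_univ _) k
      (fun b _ => fiber b)
  set W := 2 * n + 1 with hW
  have hq : h.length / W ≤ NP.card := by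
    rcases Nat.eq_zero_or_pos (h.length / W) with h0 | hpos
    · omega
    · have hL0 : 0 < h.length := lt_of_lt_of_le hpos (Nat.div_le_self _ _)
      have hwin : ∀ j : ℕ, ∃ t : Fin h.length, j < h.length / W →
          (j * W ≤ (t : ℕ) ∧ (t : ℕ) < j * W + 2 * n) ∧ t ∈ NP := by
        intro j
        by_cases hj : j < h.length / W
        · have hjW : (j + 1) * W ≤ h.length := by
            calc (j + 1) * W ≤ h.length / W * W := Nat.mul_le_mul_right _ (by omega)
            _ ≤ h.length := Nat.div_mul_le_self _ _
          have hjlt : j * W + 2 * n < h.length := by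
            have : (j + 1) * W = j * W + W := by ring
            omega
          obtain ⟨t, ht1, ht2, ht3, ht4⟩ := window_nonpass hn hI hh (j * W) hjlt
          refine ⟨⟨t, ht3⟩, fun _ => ⟨⟨ht1, ht2⟩, ?_⟩⟩
          simp only [NP, Finset.mem_filter, Finset.mem_univ, true_and]
          exact ht4
        · exact ⟨⟨0, hL0⟩, fun hc => absurd hc hj⟩
      choose ψ hψ using hwin
      have hmaps : ∀ j ∈ Finset.range (h.length / W), ψ j ∈ NP :=
        fun j hj => (hψ j (Finset.mem_range.mp hj)).2
      have hinj : Set.InjOn ψ (Finset.range (h.length / W)) := by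
        intro x hx y hy hxy
        simp only [Finset.coe_range, Set.mem_Iio] at hx hy
        by_contra hne
        rcases Nat.lt_or_ge x y with hlt | hge
        · have h1 := (hψ x hx).1
          have h2 := (hψ y hy).1
          have : (x + 1) * W ≤ y * W := Nat.mul_le_mul_right _ (by omega)
          have hxw : (x + 1) * W = x * W + W := by ring
          rw [hxy] at h1
          omega
        · have hlt : y < x := by omega
          have h1 := (hψ x hx).1
          have h2 := (hψ y hy).1
          have : (y + 1) * W ≤ x * W := Nat.mul_le_mul_right _ (by omega)
          have hyw : (y + 1) * W = y * W + W := by ring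
          rw [hxy] at h1
          omega
      have := Finset.card_le_card_of_injOn ψ hmaps hinj
      simpa using this
  have hL2 : h.length < (NP.card + 1) * W := by
    have hd1 : h.length / W * W ≤ h.length := Nat.div_mul_le_self _ _
    have hd2 : W * (h.length / W) + h.length % W = h.length := Nat.div_add_mod _ _
    have hd3 : h.length % W < W := Nat.mod_lt _ (by omega)
    have hstep : h.length < (h.length / W + 1) * W := by
      have : (h.length / W + 1) * W = W * (h.length / W) + W := by ring
      omega
    calc h.length < (h.length / W + 1) * W := hstep
    _ ≤ (NP.card + 1) * W := Nat.mul_le_mul_right _ (by omega)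
  have hcard : Fintype.card (Move G × Profile G) =
      ((∑ i, Fintype.card (G.A i)) + n) * Fintype.card (Profile G) := by
    rw [Fintype.card_prod, Fintype.card_sigma]
    congr 1
    simp [Fintype.card_option, Finset.sum_add_distrib]
  set S := ∑ i, Fintype.card (G.A i) with hS
  set C := Fintype.card (Profile G) with hC
  have hSn : n ≤ S := by
    rw [hS]
    calc n = ∑ _i : Fin n, 1 := by simp
    _ ≤ ∑ i, Fintype.card (G.A i) := Finset.sum_le_sum (fun i _ => Fintype.card_pos)
  have hC1 : 1 ≤ C := Fintype.card_pos
  have key : (k * ((S + n) * C) + 1) * W ≤ bound G k + 1 := by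
    have h1 : k * ((S + n) * C) ≤ 2 * (k * S * C) := by
      have e : k * ((S + n) * C) = k * (S * C) + k * (n * C) := by ring
      have e2 : k * (n * C) ≤ k * (S * C) :=
        Nat.mul_le_mul_left k (Nat.mul_le_mul_right C hSn)
      have e3 : 2 * (k * S * C) = k * (S * C) + k * (S * C) := by ring
      omega
    have h2 : k * S * C ≤ (k + 2) * (C + 2) * (S + 2) := by
      have a1 : k * C ≤ (k + 2) * (C + 2) := Nat.mul_le_mul (by omega) (by omega)
      have a2 : k * C * S ≤ (k + 2) * (C + 2) * (S + 2) := Nat.mul_le_mul a1 (by omega)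
      calc k * S * C = k * C * S := by ring
      _ ≤ _ := a2
    have h3 : bound G k = ((k + 2) * (C + 2) * (S + 2) + 2) * (n + 2) * 4 := rfl
    have h4 : k * S * C * n ≤ (k + 2) * (C + 2) * (S + 2) * n :=
      Nat.mul_le_mul_right n h2
    have h5 : (k * ((S + n) * C) + 1) * W ≤ (2 * (k * S * C) + 1) * (2 * n + 1) := by
      rw [hW]
      exact Nat.mul_le_mul_right _ (by omega)
    have h6 : (2 * (k * S * C) + 1) * (2 * n + 1) =
        4 * (k * S * C * n) + 2 * (k * S * C) + 2 * n + 1 := by ring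
    have h7 : ((k + 2) * (C + 2) * (S + 2) + 2) * (n + 2) * 4 =
        4 * ((k + 2) * (C + 2) * (S + 2) * n) + 8 * ((k + 2) * (C + 2) * (S + 2))
          + 8 * n + 16 := by ring
    omega
  have hfin : h.length < bound G k + 1 := by
    calc h.length < (NP.card + 1) * W := hL2
    _ ≤ (k * ((S + n) * C) + 1) * W := by
        apply Nat.mul_le_mul_right
        have := hNP
        rw [hcard] at this
        exact Nat.add_le_add_right this 1
    _ ≤ bound G k + 1 := key
  omega

/-! ### Termination within the bound, and stability -/

theorem terminal_playN (hn : 0 < n) (hI : Admissible G a0 k I) (σ : StratProfile G)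
    (hσ : ValidProfile G a0 k I σ) :
    ∀ (T : ℕ) (h : Hist G), IsNode G a0 k I h → bound G k + 1 ≤ h.length + T →
      Terminal G a0 (playN G a0 I σ T h)
  | 0, h, hh, hlen => absurd (hh.length_le_bound hn hI) (by omega)
  | (T + 1), h, hh, hlen => by
    by_cases hT : Terminal G a0 h
    · rw [playN_of_terminal σ h hT]
      exact hT
    · rw [playN_succ σ h T hT]
      exact terminal_playN hn hI σ hσ T _ (hh.concat hT (hσ h hh hT))
        (by simp only [List.length_append, List.length_cons, List.length_nil]; omega)

theorem playN_stable (hn : 0 < n) (hI : Admissible G a0 k I) (σ : StratProfile G)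
    (hσ : ValidProfile G a0 k I σ) (h : Hist G) (hh : IsNode G a0 k I h) {T T' : ℕ}
    (h1 : bound G k + 1 ≤ h.length + T) (hTT : T ≤ T') :
    playN G a0 I σ T' h = playN G a0 I σ T h := by
  obtain ⟨d, rfl⟩ := Nat.le.dest hTT
  rw [playN_add σ T d h]
  exact playN_of_terminal σ _ (terminal_playN hn hI σ hσ T h hh h1) d

/-! ### The pass deviation -/

theorem validProfile_update_pass (σ : StratProfile G) (hσ : ValidProfile G a0 k I σ)
    (i : Fin n) :
    ValidProfile G a0 k I (Function.update σ i (fun _ => none)) := by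
  intro h hh hT
  by_cases e : I h = i
  · subst e
    rw [Function.update_self]
    exact availAct_none h (I h)
  · rw [Function.update_of_ne e]
    exact hσ h hh hT

theorem satNHP_update_pass (σ : StratProfile G) (hσ : SatNHP G a0 k I σ) (i : Fin n) :
    SatNHP G a0 k I (Function.update σ i (fun _ => none)) := by
  intro h hh hT hstay j hj
  by_cases e : I h = i
  · subst e
    rw [Function.update_self] at hstay
    cases hstay
  · rw [Function.update_of_ne e] at hstay
    exact hσ h hh hT hstay j hj

/-- Along any valid NHP play in which player `i` always passes, the reference
point can only (weakly) improve for `i`. -/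
theorem refpt_mono_pass {σ' : StratProfile G} (hσv : ValidProfile G a0 k I σ')
    (hσn : SatNHP G a0 k I σ') (i : Fin n) (hpass : ∀ h, σ' i h = none) :
    ∀ (T : ℕ) (h : Hist G), IsNode G a0 k I h →
      G.u i (refpt G a0 h) ≤ G.u i (refpt G a0 (playN G a0 I σ' T h))
  | 0, h, hh => le_refl _
  | (T + 1), h, hh => by
    by_cases hT : Terminal G a0 h
    · rw [playN_of_terminal σ' h hT]
    · rw [playN_succ σ' h T hT]
      have hh' : IsNode G a0 k I (h ++ [⟨I h, σ' (I h) h⟩]) :=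
        hh.concat hT (hσv h hh hT)
      have hstep : G.u i (refpt G a0 h) ≤ G.u i (refpt G a0 (h ++ [⟨I h, σ' (I h) h⟩])) := by
        rcases refpt_concat_cases h (I h) (σ' (I h) h) with he | ⟨hstay, he⟩
        · rw [he]
        · rw [he]
          by_cases e : I h = i
          · exfalso
            subst e
            rw [hpass h] at hstay
            cases hstay
          · exact hσn h hh hT hstay i (fun heq => e heq.symm)
      exact le_trans hstep (refpt_mono_pass hσv hσn i hpass T _ hh')

/-- The key induction for uniqueness: along the equilibrium play the payoff
of every player never drops below its value at `a0`. -/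
theorem claimK (hn : 0 < n) (hI : Admissible G a0 k I) {σ : StratProfile G}
    (hσ : NHE G a0 k I σ) (i : Fin n) :
    ∀ (T : ℕ) (h : Hist G), IsNode G a0 k I h → bound G k + 1 ≤ h.length + T →
      G.u i a0 ≤ G.u i (refpt G a0 h) →
      G.u i a0 ≤ G.u i (refpt G a0 (playN G a0 I σ T h))
  | 0, h, hh, hlen, href => absurd (hh.length_le_bound hn hI) (by omega)
  | (T + 1), h, hh, hlen, href => by
    have hv : ValidProfile G a0 k I σ := hσ.1
    have hnhp : SatNHP G a0 k I σ := hσ.2.1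
    have hbest := hσ.2.2
    by_cases hT : Terminal G a0 h
    · rw [playN_of_terminal σ h hT]
      exact href
    · rw [playN_succ σ h T hT]
      have hh' : IsNode G a0 k I (h ++ [⟨I h, σ (I h) h⟩]) := hh.concat hT (hv h hh hT)
      have hlen' : bound G k + 1 ≤ (h ++ [(⟨I h, σ (I h) h⟩ : Move G)]).length + T := by
        simp only [List.length_append, List.length_cons, List.length_nil]
        omega
      rcases refpt_concat_cases h (I h) (σ (I h) h) with he | ⟨hstay, he⟩
      · exact claimK hn hI hσ i T _ hh' hlen' (by rw [he]; exact href)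
      · by_cases e : I h = i
        · -- player `i` stays here: use the equilibrium property with the pass deviation
          subst e
          have hupv := validProfile_update_pass σ hv (I h)
          have hupn := satNHP_update_pass σ hnhp (I h)
          have hdev := hbest h hh hT (fun _ => none) hupv hupn
          have hpass : ∀ h', (Function.update σ (I h) (fun _ => none)) (I h) h' = none := by
            intro h'
            rw [Function.update_self]
          have hmono := refpt_mono_pass hupv hupn (I h) hpass (bound G k + 1) h hh
          have h2 : G.u (I h) a0 ≤ G.u (I h) (outcomeFrom G a0 k I σ h) :=
            le_trans (le_trans href hmono) hdev
          have h3 : playN G a0 I σ (bound G k + 1) h = playN G a0 I σ (T + 1) h := by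
            rcases le_or_gt (T + 1) (bound G k + 1) with hc | hc
            · exact playN_stable hn hI σ hv h hh hlen hc
            · exact (playN_stable hn hI σ hv h hh
                (by omega : bound G k + 1 ≤ h.length + (bound G k + 1)) hc.le).symm
          rw [outcomeFrom, h3, playN_succ σ h T hT] at h2
          exact h2
        · have hst : G.u i (refpt G a0 h) ≤ G.u i (state G a0 h) :=
            hnhp h hh hT hstay i (fun heq => e heq.symm)
          exact claimK hn hI hσ i T _ hh' hlen'
            (by rw [he]; exact le_trans href hst)

end Aux

/-! ### Backward induction construction of a no-harm equilibrium -/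

open Classical in
/-- The set of available, NHP-compliant choices of the active player at `h`. -/
noncomputable def Cset (G : Game n) (a0 : Profile G) (k : ℕ) (I : Hist G → Fin n)
    (h : Hist G) : Finset (Option (G.A (I h))) :=
  Finset.univ.filter (fun c => availAct G a0 k h c ∧
    (c = some (state G a0 h (I h)) →
      ∀ j, j ≠ I h → G.u j (refpt G a0 h) ≤ G.u j (state G a0 h)))

section Aux2

variable {G : Game n} {a0 : Profile G} {k : ℕ} {I : Hist G → Fin n}

theorem Cset_nonempty (G : Game n) (a0 : Profile G) (k : ℕ) (I : Hist G → Fin n)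
    (h : Hist G) : (Cset G a0 k I h).Nonempty := by
  classical
  refine ⟨none, ?_⟩
  unfold Cset
  rw [Finset.mem_filter]
  refine ⟨Finset.mem_univ _, ?_, ?_⟩
  · intro a ha
    cases ha
  · intro hc
    cases hc

theorem mem_Cset_avail {h : Hist G} {c : Option (G.A (I h))}
    (hc : c ∈ Cset G a0 k I h) : availAct G a0 k h c := by
  classical
  unfold Cset at hc
  rw [Finset.mem_filter] at hc
  exact hc.2.1

theorem mem_Cset_nhp {h : Hist G} {c : Option (G.A (I h))}
    (hc : c ∈ Cset G a0 k I h) (hs : c = some (state G a0 h (I h))) :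
    ∀ j, j ≠ I h → G.u j (refpt G a0 h) ≤ G.u j (state G a0 h) := by
  classical
  unfold Cset at hc
  rw [Finset.mem_filter] at hc
  exact hc.2.2 hs

theorem mem_Cset {h : Hist G} {c : Option (G.A (I h))} (hav : availAct G a0 k h c)
    (hnhp : c = some (state G a0 h (I h)) →
      ∀ j, j ≠ I h → G.u j (refpt G a0 h) ≤ G.u j (state G a0 h)) :
    c ∈ Cset G a0 k I h := by
  classical
  unfold Cset
  rw [Finset.mem_filter]
  exact ⟨Finset.mem_univ _, hav, hnhp⟩

end Aux2

open Classical in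
/-- Backward-induction play with the given amount of fuel: at each step the
active player makes the choice whose continuation value (for them) is maximal
among available NHP-compliant choices. -/
noncomputable def BIplay (G : Game n) (a0 : Profile G) (k : ℕ) (I : Hist G → Fin n) :
    ℕ → Hist G → Hist G
  | 0, h => h
  | (T + 1), h =>
    if Terminal G a0 h then h
    else BIplay G a0 k I T (h ++ [⟨I h, Classical.choose
      ((Cset G a0 k I h).exists_max_image
        (fun c => G.u (I h) (refpt G a0 (BIplay G a0 k I T (h ++ [⟨I h, c⟩]))))
        (Cset_nonempty G a0 k I h))⟩])

open Classical in
/-- The backward-induction choice of the active player at `h` with fuel `T`. -/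
noncomputable def pickF (G : Game n) (a0 : Profile G) (k : ℕ) (I : Hist G → Fin n)
    (T : ℕ) (h : Hist G) : Option (G.A (I h)) :=
  Classical.choose
    ((Cset G a0 k I h).exists_max_image
      (fun c => G.u (I h) (refpt G a0 (BIplay G a0 k I T (h ++ [⟨I h, c⟩]))))
      (Cset_nonempty G a0 k I h))

/-- The backward-induction strategy profile. -/
noncomputable def sigBI (G : Game n) (a0 : Profile G) (k : ℕ) (I : Hist G → Fin n) :
    StratProfile G :=
  fun i h => if e : I h = i then e ▸ pickF G a0 k I (bound G k - h.length) h else none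

section Aux3

variable {G : Game n} {a0 : Profile G} {k : ℕ} {I : Hist G → Fin n}

theorem BIplay_zero (h : Hist G) : BIplay G a0 k I 0 h = h := rfl

theorem BIplay_succ_terminal (T : ℕ) (h : Hist G) (hT : Terminal G a0 h) :
    BIplay G a0 k I (T + 1) h = h := by
  rw [BIplay]
  rw [if_pos hT]

theorem BIplay_succ (T : ℕ) (h : Hist G) (hT : ¬ Terminal G a0 h) :
    BIplay G a0 k I (T + 1) h
      = BIplay G a0 k I T (h ++ [⟨I h, pickF G a0 k I T h⟩]) := by
  rw [BIplay]
  rw [if_neg hT]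
  rfl

theorem pickF_prop (T : ℕ) (h : Hist G) :
    pickF G a0 k I T h ∈ Cset G a0 k I h ∧
      ∀ c ∈ Cset G a0 k I h,
        G.u (I h) (refpt G a0 (BIplay G a0 k I T (h ++ [(⟨I h, c⟩ : Move G)]))) ≤
          G.u (I h) (refpt G a0 (BIplay G a0 k I T
            (h ++ [(⟨I h, pickF G a0 k I T h⟩ : Move G)]))) := by
  unfold pickF
  exact Classical.choose_spec ((Cset G a0 k I h).exists_max_image
    (fun c => G.u (I h) (refpt G a0 (BIplay G a0 k I T (h ++ [(⟨I h, c⟩ : Move G)]))))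
    (Cset_nonempty G a0 k I h))

theorem pickF_mem (T : ℕ) (h : Hist G) : pickF G a0 k I T h ∈ Cset G a0 k I h :=
  (pickF_prop T h).1

theorem pickF_spec (T : ℕ) (h : Hist G) :
    ∀ c ∈ Cset G a0 k I h,
      G.u (I h) (refpt G a0 (BIplay G a0 k I T (h ++ [(⟨I h, c⟩ : Move G)]))) ≤
        G.u (I h) (refpt G a0 (BIplay G a0 k I T
          (h ++ [(⟨I h, pickF G a0 k I T h⟩ : Move G)]))) :=
  (pickF_prop T h).2

theorem sigBI_self (h : Hist G) :
    sigBI G a0 k I (I h) h = pickF G a0 k I (bound G k - h.length) h := by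
  unfold sigBI
  rw [dif_pos rfl]

theorem sigBI_valid : ValidProfile G a0 k I (sigBI G a0 k I) := by
  intro h hh hT
  rw [sigBI_self]
  exact mem_Cset_avail (pickF_mem _ h)

theorem sigBI_nhp : SatNHP G a0 k I (sigBI G a0 k I) := by
  intro h hh hT hstay j hj
  rw [sigBI_self] at hstay
  exact mem_Cset_nhp (pickF_mem _ h) hstay j hj

/-- Alignment: if the play is started with fuel exactly matching the depth
budget, `playN` under `sigBI` coincides with `BIplay`. -/
theorem playN_sigBI_eq_BIplay :
    ∀ (T : ℕ) (h : Hist G), h.length + T = bound G k + 1 →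
      playN G a0 I (sigBI G a0 k I) T h = BIplay G a0 k I T h
  | 0, h, hlen => rfl
  | (T + 1), h, hlen => by
    by_cases hT : Terminal G a0 h
    · rw [playN_of_terminal _ h hT, BIplay_succ_terminal T h hT]
    · rw [playN_succ _ h T hT, BIplay_succ T h hT, sigBI_self]
      have e : bound G k - h.length = T := by omega
      rw [e]
      exact playN_sigBI_eq_BIplay T _
        (by simp only [List.length_append, List.length_cons, List.length_nil]; omega)

/-- Backward-induction optimality: against `sigBI`-opponents, no valid
NHP-compliant strategy of player `i` can beat `sigBI` in any subgame. -/
theorem claimD (hn : 0 < n) (hI : Admissible G a0 k I) (i : Fin n)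
    (σ' : StratProfile G) (hv : ValidProfile G a0 k I σ') (hnhp : SatNHP G a0 k I σ')
    (hagree : ∀ j, j ≠ i → σ' j = sigBI G a0 k I j) :
    ∀ (T : ℕ) (h : Hist G), IsNode G a0 k I h → bound G k + 1 ≤ h.length + T →
      G.u i (refpt G a0 (playN G a0 I σ' T h)) ≤
        G.u i (refpt G a0 (playN G a0 I (sigBI G a0 k I) T h))
  | 0, h, hh, hlen => absurd (hh.length_le_bound hn hI) (by omega)
  | (T + 1), h, hh, hlen => by
    by_cases hT : Terminal G a0 h
    · rw [playN_of_terminal σ' h hT, playN_of_terminal _ h hT]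
    · have hlb : h.length ≤ bound G k := hh.length_le_bound hn hI
      by_cases e : I h = i
      · -- the active player is the deviator
        rw [← e]
        rw [playN_succ σ' h T hT, playN_succ _ h T hT, sigBI_self]
        set c' := σ' (I h) h with hc'
        set cs := pickF G a0 k I (bound G k - h.length) h with hcs
        have hc'mem : c' ∈ Cset G a0 k I h :=
          mem_Cset (hv h hh hT) (fun hs j hj => hnhp h hh hT hs j hj)
        have hh1 : IsNode G a0 k I (h ++ [(⟨I h, c'⟩ : Move G)]) :=
          hh.concat hT (hv h hh hT)
        have hh2 : IsNode G a0 k I (h ++ [(⟨I h, cs⟩ : Move G)]) :=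
          hh.concat hT (mem_Cset_avail (pickF_mem _ h))
        have hlen1 : (h ++ [(⟨I h, c'⟩ : Move G)]).length = h.length + 1 := by simp
        have hlen2 : (h ++ [(⟨I h, cs⟩ : Move G)]).length = h.length + 1 := by simp
        have hIH := claimD hn hI i σ' hv hnhp hagree T (h ++ [⟨I h, c'⟩]) hh1
          (by rw [hlen1]; omega)
        rw [← e] at hIH
        have hst1 : playN G a0 I (sigBI G a0 k I) T (h ++ [⟨I h, c'⟩]) =
            playN G a0 I (sigBI G a0 k I) (bound G k - h.length) (h ++ [⟨I h, c'⟩]) :=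
          playN_stable hn hI _ sigBI_valid _ hh1 (by rw [hlen1]; omega) (by omega)
        have hal1 : playN G a0 I (sigBI G a0 k I) (bound G k - h.length)
              (h ++ [⟨I h, c'⟩]) = BIplay G a0 k I (bound G k - h.length) (h ++ [⟨I h, c'⟩]) :=
          playN_sigBI_eq_BIplay _ _ (by rw [hlen1]; omega)
        have hst2 : playN G a0 I (sigBI G a0 k I) T (h ++ [⟨I h, cs⟩]) =
            playN G a0 I (sigBI G a0 k I) (bound G k - h.length) (h ++ [⟨I h, cs⟩]) :=
          playN_stable hn hI _ sigBI_valid _ hh2 (by rw [hlen2]; omega) (by omega)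
        have hal2 : playN G a0 I (sigBI G a0 k I) (bound G k - h.length)
              (h ++ [⟨I h, cs⟩]) = BIplay G a0 k I (bound G k - h.length) (h ++ [⟨I h, cs⟩]) :=
          playN_sigBI_eq_BIplay _ _ (by rw [hlen2]; omega)
        have hpick := pickF_spec (bound G k - h.length) h c' hc'mem
        calc G.u (I h) (refpt G a0 (playN G a0 I σ' T (h ++ [⟨I h, c'⟩])))
            ≤ G.u (I h) (refpt G a0 (playN G a0 I (sigBI G a0 k I) T (h ++ [⟨I h, c'⟩]))) :=
              hIH
          _ = G.u (I h) (refpt G a0 (BIplay G a0 k I (bound G k - h.length)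
                (h ++ [⟨I h, c'⟩]))) := by rw [hst1, hal1]
          _ ≤ G.u (I h) (refpt G a0 (BIplay G a0 k I (bound G k - h.length)
                (h ++ [⟨I h, cs⟩]))) := hpick
          _ = G.u (I h) (refpt G a0 (playN G a0 I (sigBI G a0 k I) T
                (h ++ [⟨I h, cs⟩]))) := by rw [hst2, hal2]
      · -- a different player is active: both profiles play the same move
        rw [playN_succ σ' h T hT, playN_succ _ h T hT]
        have hag : σ' (I h) h = sigBI G a0 k I (I h) h := by rw [hagree (I h) e]
        rw [hag]
        have hav : availAct G a0 k h (sigBI G a0 k I (I h) h) := by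
          rw [← hag]
          exact hv h hh hT
        exact claimD hn hI i σ' hv hnhp hagree T _ (hh.concat hT hav)
          (by simp only [List.length_append, List.length_cons, List.length_nil]; omega)

theorem sigBI_NHE (hn : 0 < n) (hI : Admissible G a0 k I) :
    NHE G a0 k I (sigBI G a0 k I) := by
  refine ⟨sigBI_valid, sigBI_nhp, ?_⟩
  intro h hh hT τ hvu hnu
  have hagree : ∀ j, j ≠ I h →
      Function.update (sigBI G a0 k I) (I h) τ j = sigBI G a0 k I j :=
    fun j hj => Function.update_of_ne hj _ _
  exact claimD hn hI (I h) _ hvu hnu hagree (bound G k + 1) h hh (by omega)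

end Aux3

/-- If the initial reference point `a0` is itself Pareto
optimal, then for every `k ≥ 1` and every admissible player function the
no-harm equilibrium outcome of `Γ(a0,k,I)` is `a0` itself. -/
theorem nhe_outcome_of_paretoOpt_ref {n : ℕ} (hn : 2 ≤ n) (G : Game n)
    (hG : StrictPrefs G) (a0 : Profile G) (ha0 : ParetoOpt G a0)
    (k : ℕ) (hk : 0 < k) (I : Hist G → Fin n) (hI : Admissible G a0 k I) :
    (∃ σ : StratProfile G, NHE G a0 k I σ) ∧
    (∀ σ : StratProfile G, NHE G a0 k I σ → outcome G a0 k I σ = a0) := by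
  have hn' : 0 < n := by omega
  constructor
  · exact ⟨sigBI G a0 k I, sigBI_NHE hn' hI⟩
  · intro σ hσ
    have hKey : ∀ i, G.u i a0 ≤ G.u i (outcome G a0 k I σ) := by
      intro i
      have h0 : G.u i a0 ≤ G.u i (refpt G a0 ([] : Hist G)) := le_of_eq rfl
      exact claimK hn' hI hσ i (bound G k + 1) [] isNode_nil (by simp) h0
    by_contra ho
    refine ha0 (outcome G a0 k I σ) ⟨hKey, ⟨⟨0, by omega⟩, ?_⟩⟩
    refine lt_of_le_of_ne (hKey _) ?_
    intro heq
    exact ho (hG _ heq).symm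

end NoHarm
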